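/- arXiv:1504.07411 — 3 statements merged into one kernel-verified Lean document; each statement's English description precedes it below -/
import Mathlib

section
/- If A, B ⊆ ℕ satisfy s_A = lim_{x→∞} s_A(x) < ∞ and d_{A,B} = lim_{x→∞} d_{A,B}(x) < ∞, then s_A/(4·d_{A,B}+1) ≤ s_B ≤ (4·d_{A,B}+1)·s_A. -/
open Filter

/-- Number of representations of `n` as `a i + a j`, `i ≤ j` (indices into the sequence `a`).
Since `a` is strictly increasing in all uses, `a i ≥ i`, so indices are bounded by `n`. -/
def Rf (a : ℕ → ℕ) (n : ℕ) : ℕ :=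
  ((Finset.range (n+1) ×ˢ Finset.range (n+1)).filter
    (fun p => p.1 ≤ p.2 ∧ a p.1 + a p.2 = n)).card

/-- `s_A(x) = max_{n ≤ x} R_A(n)`. -/
def sf (a : ℕ → ℕ) (x : ℕ) : ℕ := (Finset.range (x+1)).sup (Rf a)

/-- `d_{A,B}(x) = max_{t : a_t ≤ x ∨ b_t ≤ x} |a_t - b_t|`. For strictly increasing
sequences any such index `t` satisfies `t ≤ x`. -/
def df (a b : ℕ → ℕ) (x : ℕ) : ℕ :=
  (Finset.range (x+1)).sup (fun t => if a t ≤ x ∨ b t ≤ x then Nat.dist (a t) (b t) else 0)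

/-- Number of representations of `n` as `p + q` with `p ≤ q`, `p, q ∈ A`. -/
noncomputable def RS (A : Set ℕ) (n : ℕ) : ℕ :=
  Nat.card {p : ℕ × ℕ // p.1 ∈ A ∧ p.2 ∈ A ∧ p.1 ≤ p.2 ∧ p.1 + p.2 = n}

/-- `s_A(x) = max_{n ≤ x} R_A(n)` for a set `A`. -/
noncomputable def sS (A : Set ℕ) (x : ℕ) : ℕ := (Finset.range (x+1)).sup (RS A)

open Finset

/-!
A representation `n = a i + a j` gives, with the same indices, a representation `b i + b j` of
some `m` with `|m - n| ≤ 2d`; hence `R_A(n)` is at most the sum of `R_B(m)` over the `4d + 1`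
integers `m ∈ [n - 2d, n + 2d]`, each of which is at most `s_B`. Eventual constancy of `s_A(x)`
says exactly that `s_A` is the supremum of `R_A`, and the other inequality follows by symmetry.
-/

theorem isLUB_range_of_eventually_sup_range_eq {f : ℕ → ℕ} {s : ℕ}
    (h : ∀ᶠ x in atTop, (range (x + 1)).sup f = s) : IsLUB (Set.range f) s := by
  obtain ⟨N, hN⟩ := eventually_atTop.mp h
  refine ⟨?_, fun c hc => ?_⟩
  · rintro _ ⟨n, rfl⟩
    rw [← hN (max n N) (le_max_right n N)]
    exact Finset.le_sup (mem_range.mpr (Nat.lt_succ_of_le (le_max_left n N)))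
  · rw [← hN N le_rfl]
    exact Finset.sup_le fun n _ => hc ⟨n, rfl⟩

theorem dist_le_of_eventually_df_eq {a b : ℕ → ℕ} {d : ℕ}
    (h : ∀ᶠ x in atTop, df a b x = d) (t : ℕ) : Nat.dist (a t) (b t) ≤ d := by
  obtain ⟨N, hN⟩ := eventually_atTop.mp h
  set x := max N (max t (a t))
  have ht : t ∈ range (x + 1) := mem_range.mpr (by omega)
  have hax : a t ≤ x := by omega
  rw [← hN x (le_max_left _ _), df]
  refine le_trans ?_ (Finset.le_sup ht)
  simp [hax]

section Perturbation

variable {a b : ℕ → ℕ} {d : ℕ}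

theorem Rf_le_sum_Rf_Icc (hb : StrictMono b) (hdist : ∀ t, Nat.dist (a t) (b t) ≤ d)
    (n : ℕ) : Rf a n ≤ ∑ m ∈ Icc (n - 2 * d) (n + 2 * d), Rf b m := by
  classical
  set S := (range (n + 1) ×ˢ range (n + 1)).filter
    (fun p => p.1 ≤ p.2 ∧ a p.1 + a p.2 = n)
  have hmaps : ∀ p ∈ S, b p.1 + b p.2 ∈ Icc (n - 2 * d) (n + 2 * d) := by
    intro p hp
    obtain ⟨-, -, hsum⟩ := mem_filter.mp hp
    have h1 := hdist p.1
    have h2 := hdist p.2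
    simp only [Nat.dist] at h1 h2
    rw [mem_Icc]
    omega
  have hfiber : ∀ m, (S.filter fun p => b p.1 + b p.2 = m).card ≤ Rf b m := by
    intro m
    apply card_le_card
    intro p hp
    simp only [S, mem_filter, mem_product, mem_range] at hp ⊢
    obtain ⟨⟨-, hle, -⟩, hsum⟩ := hp
    -- `i ≤ b i` keeps the indices within the range that `Rf b m` searches.
    have h1 : p.1 ≤ b p.1 := hb.le_apply
    have h2 : p.2 ≤ b p.2 := hb.le_apply
    exact ⟨⟨by omega, by omega⟩, hle, hsum⟩
  calc Rf a n = S.card := rfl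
    _ = ∑ m ∈ Icc (n - 2 * d) (n + 2 * d), (S.filter fun p => b p.1 + b p.2 = m).card :=
        card_eq_sum_card_fiberwise hmaps
    _ ≤ _ := sum_le_sum fun m _ => hfiber m

theorem Rf_le_of_dist_le {s : ℕ} (hb : StrictMono b) (hdist : ∀ t, Nat.dist (a t) (b t) ≤ d)
    (hs : ∀ m, Rf b m ≤ s) (n : ℕ) : Rf a n ≤ (4 * d + 1) * s :=
  calc Rf a n ≤ ∑ m ∈ Icc (n - 2 * d) (n + 2 * d), Rf b m := Rf_le_sum_Rf_Icc hb hdist n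
    _ ≤ ∑ _m ∈ Icc (n - 2 * d) (n + 2 * d), s := sum_le_sum fun m _ => hs m
    _ = (Icc (n - 2 * d) (n + 2 * d)).card * s := by rw [sum_const, smul_eq_mul]
    _ ≤ (4 * d + 1) * s := Nat.mul_le_mul_right _ (by rw [Nat.card_Icc]; omega)

end Perturbation

theorem stmt2 (a b : ℕ → ℕ) (ha : StrictMono a) (hb : StrictMono b)
    (sA sB dAB : ℕ)
    (hsA : ∀ᶠ x in atTop, sf a x = sA)
    (hsB : ∀ᶠ x in atTop, sf b x = sB)
    (hd : ∀ᶠ x in atTop, df a b x = dAB) :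
    sA ≤ (4 * dAB + 1) * sB ∧ sB ≤ (4 * dAB + 1) * sA := by
  have hRa : IsLUB (Set.range (Rf a)) sA := isLUB_range_of_eventually_sup_range_eq hsA
  have hRb : IsLUB (Set.range (Rf b)) sB := isLUB_range_of_eventually_sup_range_eq hsB
  have hdist := dist_le_of_eventually_df_eq hd
  have hdist' : ∀ t, Nat.dist (b t) (a t) ≤ dAB := fun t =>
    Nat.dist_comm (a t) (b t) ▸ hdist t
  constructor
  · refine (isLUB_le_iff hRa).mpr (Set.forall_mem_range.mpr fun n => ?_)
    exact Rf_le_of_dist_le hb hdist (fun m => hRb.1 ⟨m, rfl⟩) n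
  · refine (isLUB_le_iff hRb).mpr (Set.forall_mem_range.mpr fun n => ?_)
    exact Rf_le_of_dist_le ha hdist' (fun m => hRa.1 ⟨m, rfl⟩) n
end

section
/- Suppose A, B ⊆ ℕ satisfy s_A = +∞ and d := d_{A,B} < +∞. Then limsup_{x→∞} s_B(x)/s_A(x + 2d) ≤ 4d + 1 and liminf_{x→∞} s_B(x)/s_A(x − 2d) ≥ 1/(4d+1). -/
open Filter

/-!
If `|a_t - b_t| ≤ d` for all `t`, every representation `n = b_i + b_j` gives a representation
`m = a_i + a_j` with the same indices and `|m - n| ≤ 2d`, so `R_B(n)` is at most the sum of the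
`4d + 1` values `R_A(m)`, `m ∈ [n - 2d, n + 2d]`; hence `s_B(x) ≤ (4d + 1) s_A(x + 2d)`, and
symmetrically `s_A(x - 2d) ≤ (4d + 1) s_B(x)`. This gives both bounds, except that the `liminf`
is only meaningful once the ratio `s_B(x) / s_A(x - 2d)` is frequently bounded. That holds because
`s_A(x) ≤ x + 1` grows at most linearly, so `s_A(y + 4d) ≤ 2 s_A(y)` for infinitely many `y`.
-/

open Finset

variable {a b : ℕ → ℕ} {d : ℕ}

/-- `Rf a n` is definitionally `(reprFinset a n).card`. -/
def reprFinset (a : ℕ → ℕ) (n : ℕ) : Finset (ℕ × ℕ) :=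
  (range (n + 1) ×ˢ range (n + 1)).filter (fun p => p.1 ≤ p.2 ∧ a p.1 + a p.2 = n)

lemma mem_reprFinset (ha : StrictMono a) {n : ℕ} {p : ℕ × ℕ} :
    p ∈ reprFinset a n ↔ p.1 ≤ p.2 ∧ a p.1 + a p.2 = n := by
  have h1 : p.1 ≤ a p.1 := ha.le_apply
  have h2 : p.2 ≤ a p.2 := ha.le_apply
  simp only [reprFinset, mem_filter, mem_product, mem_range]
  constructor
  · exact fun h => h.2
  · rintro ⟨hle, rfl⟩
    exact ⟨⟨by omega, by omega⟩, hle, rfl⟩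

lemma Rf_le_succ (ha : Function.Injective a) (n : ℕ) : Rf a n ≤ n + 1 := by
  calc Rf a n ≤ (range (n + 1)).card := card_le_card_of_injOn Prod.fst
        (fun p hp => (mem_product.1 (mem_filter.1 hp).1).1)
        (fun p hp q hq hpq => by
          have hp' := (mem_filter.1 hp).2.2
          have hq' := (mem_filter.1 hq).2.2
          have hsnd : a p.2 = a q.2 := by rw [hpq] at hp'; omega
          exact Prod.ext hpq (ha hsnd))
    _ = n + 1 := card_range _

lemma Rf_le_sf {m x : ℕ} (hm : m ≤ x) : Rf a m ≤ sf a x :=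
  le_sup (f := Rf a) (mem_range.2 (by omega))

lemma sf_le_succ (ha : Function.Injective a) (x : ℕ) : sf a x ≤ x + 1 :=
  Finset.sup_le fun n hn => (Rf_le_succ ha n).trans (by simp at hn; omega)

lemma dist_le_of_eventually_df_le (hd : ∀ᶠ x in atTop, df a b x ≤ d) (t : ℕ) :
    Nat.dist (a t) (b t) ≤ d := by
  obtain ⟨x, hx, htx, hatx⟩ : ∃ x, df a b x ≤ d ∧ t ≤ x ∧ a t ≤ x :=
    ((hd.and (eventually_ge_atTop t)).and (eventually_ge_atTop (a t))).exists.imp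
      fun _ h => ⟨h.1.1, h.1.2, h.2⟩
  have hle := le_sup (f := fun t => if a t ≤ x ∨ b t ≤ x then Nat.dist (a t) (b t) else 0)
    (mem_range.2 (Nat.lt_succ_of_le htx))
  rw [if_pos (Or.inl hatx)] at hle
  exact hle.trans hx

section Comparison

variable (ha : StrictMono a) (hdist : ∀ t, Nat.dist (a t) (b t) ≤ d)
include ha hdist

lemma Rf_le_sum_Rf (n : ℕ) : Rf b n ≤ ∑ m ∈ Icc (n - 2 * d) (n + 2 * d), Rf a m := by
  have hsub : reprFinset b n ⊆ (Icc (n - 2 * d) (n + 2 * d)).biUnion (reprFinset a) := by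
    intro p hp
    obtain ⟨hle, hsum⟩ := (mem_filter.1 hp).2
    have h1 := hdist p.1
    have h2 := hdist p.2
    simp only [Nat.dist] at h1 h2
    exact mem_biUnion.2 ⟨a p.1 + a p.2, mem_Icc.2 ⟨by omega, by omega⟩,
      (mem_reprFinset ha).2 ⟨hle, rfl⟩⟩
  exact (card_le_card hsub).trans card_biUnion_le

lemma sf_le_mul_sf_add (x : ℕ) : sf b x ≤ (4 * d + 1) * sf a (x + 2 * d) := by
  refine Finset.sup_le fun n hn => ?_
  have hnx : n ≤ x := Nat.lt_succ_iff.1 (mem_range.1 hn)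
  calc Rf b n ≤ ∑ m ∈ Icc (n - 2 * d) (n + 2 * d), Rf a m := Rf_le_sum_Rf ha hdist n
    _ ≤ (Icc (n - 2 * d) (n + 2 * d)).card • sf a (x + 2 * d) :=
        sum_le_card_nsmul _ _ _ fun m hm => Rf_le_sf (by simp at hm; omega)
    _ ≤ (4 * d + 1) * sf a (x + 2 * d) := by
        rw [smul_eq_mul, Nat.card_Icc]
        exact Nat.mul_le_mul_right _ (by omega)

end Comparison

lemma exists_mul_add_lt_two_pow (m c : ℕ) : ∃ k, m * k + c < 2 ^ k := by
  refine ⟨4 * (m + c + 2), ?_⟩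
  set t := m + c + 2 with ht
  have h1 : (t + 1) ^ 4 ≤ (2 ^ t) ^ 4 := Nat.pow_le_pow_left (Nat.lt_two_pow_self : t < 2 ^ t) 4
  have h2 : (2 : ℕ) ^ (4 * t) = (2 ^ t) ^ 4 := by rw [← pow_mul, mul_comm]
  have h3 : m * (4 * t) + c < (t + 1) ^ 4 := by nlinarith [sq_nonneg t]
  omega

lemma frequently_le_two_mul_of_le_succ {f : ℕ → ℕ} (hf : ∀ x, f x ≤ x + 1)
    (hpos : ∀ᶠ x in atTop, 1 ≤ f x) (e : ℕ) : ∃ᶠ y in atTop, f (y + e) ≤ 2 * f y := by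
  by_contra h
  simp only [not_frequently, not_le] at h
  obtain ⟨N, hN⟩ := eventually_atTop.1 (h.and hpos)
  have hpow : ∀ k, 2 ^ k ≤ f (N + e * k) := by
    intro k
    induction k with
    | zero => simpa using (hN N le_rfl).2
    | succ k ih =>
        have hstep := (hN (N + e * k) (by omega)).1
        rw [show N + e * k + e = N + e * (k + 1) by ring] at hstep
        rw [pow_succ]
        omega
  obtain ⟨k, hk⟩ := exists_mul_add_lt_two_pow e (N + 1)
  have := hpow k
  have := hf (N + e * k)
  omega

lemma limsup_sf_div_sf_add_le (ha : StrictMono a) (hdist : ∀ t, Nat.dist (a t) (b t) ≤ d) :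
    limsup (fun x : ℕ => (sf b x : ℝ) / (sf a (x + 2 * d) : ℝ)) atTop ≤ 4 * d + 1 := by
  refine limsup_le_of_le (IsCoboundedUnder.of_frequently_ge
    (Frequently.of_forall fun x => by positivity)) (Eventually.of_forall fun x => ?_)
  refine div_le_of_le_mul₀ (by positivity) (by positivity) ?_
  exact_mod_cast sf_le_mul_sf_add ha hdist x

lemma le_liminf_sf_div_sf_sub (ha : StrictMono a) (hb : StrictMono b)
    (hdist : ∀ t, Nat.dist (a t) (b t) ≤ d) (hsA : Tendsto (sf a) atTop atTop) :
    (1 : ℝ) / (4 * d + 1) ≤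
      liminf (fun x : ℕ => (sf b x : ℝ) / (sf a (x - 2 * d) : ℝ)) atTop := by
  have hdist' : ∀ t, Nat.dist (b t) (a t) ≤ d := fun t => Nat.dist_comm (b t) (a t) ▸ hdist t
  have hpos : ∀ᶠ y in atTop, 1 ≤ sf a y := hsA.eventually_ge_atTop 1
  have hbounded : ∃ᶠ x in atTop, (sf b x : ℝ) / (sf a (x - 2 * d) : ℝ) ≤ 2 * (4 * d + 1) := by
    have hfreq := frequently_le_two_mul_of_le_succ (sf_le_succ ha.injective) hpos (4 * d)
    refine frequently_atTop.2 fun M => ?_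
    obtain ⟨y, hyM, hdouble, hy⟩ := frequently_atTop.1 (hfreq.and_eventually hpos) M
    refine ⟨y + 2 * d, by omega, ?_⟩
    rw [Nat.add_sub_cancel, div_le_iff₀ (by exact_mod_cast hy)]
    rw [show y + 4 * d = y + 2 * d + 2 * d by ring] at hdouble
    have key : sf b (y + 2 * d) ≤ (4 * d + 1) * (2 * sf a y) :=
      (sf_le_mul_sf_add ha hdist (y + 2 * d)).trans (Nat.mul_le_mul_left _ hdouble)
    exact_mod_cast key.trans_eq (by ring)
  refine le_liminf_of_le (IsCoboundedUnder.of_frequently_le hbounded) ?_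
  filter_upwards [(hsA.comp (tendsto_sub_atTop_nat (2 * d))).eventually_ge_atTop 1,
    eventually_ge_atTop (2 * d)] with x hx hx2
  rw [div_le_div_iff₀ (by positivity) (by exact_mod_cast hx), one_mul]
  have key := sf_le_mul_sf_add hb hdist' (x - 2 * d)
  rw [Nat.sub_add_cancel hx2] at key
  exact_mod_cast key.trans_eq (mul_comm _ _)

theorem stmt4 (a b : ℕ → ℕ) (ha : StrictMono a) (hb : StrictMono b) (d : ℕ)
    (hsA : Tendsto (sf a) atTop atTop)
    (hd : ∀ᶠ x in atTop, df a b x = d) :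
    limsup (fun x : ℕ => (sf b x : ℝ) / (sf a (x + 2 * d) : ℝ)) atTop ≤ 4 * d + 1 ∧
    (1 : ℝ) / (4 * d + 1) ≤
      liminf (fun x : ℕ => (sf b x : ℝ) / (sf a (x - 2 * d) : ℝ)) atTop := by
  have hdist := dist_le_of_eventually_df_le (hd.mono fun _ h => h.le)
  exact ⟨limsup_sf_div_sf_add_le ha hdist, le_liminf_sf_div_sf_sub ha hb hdist hsA⟩
end

section
/- There exist sets A, B ⊆ ℕ such that A is a Sidon set (s_A = 1), d_{A,B}(n) ≪ n^{1/3}, and s_B(n) ≫ n^{1/3}. -/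
open Filter

/-!
The set `A` is built greedily in blocks. Block `k` consists of `2 ^ k` pairs `(c, w)`: a centre
`c ∈ [1000 · 8 ^ k, 2000 · 8 ^ k)` and a partner `w` with `c + w ∈ [N, N + 20 · 2 ^ k]`, where
`N = 7000 · 8 ^ k`, each new element keeping `A` Sidon. The set `B` is `A` with every partner `w`
moved to `N - c`, so `N` has `2 ^ k ≍ N ^ (1/3)` representations in `B`, while no element moves by
more than `20 · 2 ^ k`, which is `O(x ^ (1/3))` for an element `x` of block `k`.

At each step `A` has `O(2 ^ k)` elements, so only `O(8 ^ k)` centres are forbidden and a centre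
exists. The centre is moreover chosen so that, by double counting, few partners in its window are
forbidden; pair sums of `A` in `[N, N + 20 · 2 ^ k]` come only from earlier pairs of the same block.
Hence a partner exists as well. Taking each centre least possible and far from `A` makes the
centres of a block increase with gaps larger than `20 · 2 ^ k`, so listing a block as its centres
followed by its partners keeps both sequences increasing.
-/

open Finset
open scoped Pointwise

def IsSidon {α : Type*} [Add α] (A : Set α) : Prop :=
  ∀ a ∈ A, ∀ b ∈ A, ∀ c ∈ A, ∀ d ∈ A, a + b = c + d → a = c ∧ b = d ∨ a = d ∧ b = c

theorem IsSidon.mono {α : Type*} [Add α] {A B : Set α} (hB : IsSidon B) (h : A ⊆ B) :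
    IsSidon A :=
  fun a ha b hb c hc d hd => hB a (h ha) b (h hb) c (h hc) d (h hd)

theorem IsSidon.insert {α : Type*} [AddCommGroup α] {A : Set α} {u : α} (hA : IsSidon A)
    (h₁ : u ∉ A + A - A) (h₂ : u + u ∉ A + A) : IsSidon (insert u A) := by
  have h₁' : ∀ x ∈ A, ∀ y ∈ A, ∀ z ∈ A, u + x ≠ y + z := fun x hx y hy z hz h =>
    h₁ ⟨y + z, Set.add_mem_add hy hz, x, hx, by simp only [← h, add_sub_cancel_right]⟩
  have h₂' : ∀ y ∈ A, ∀ z ∈ A, u + u ≠ y + z := fun y hy z hz h =>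
    h₂ (h ▸ Set.add_mem_add hy hz)
  have hu : u ∉ A := fun hu => h₁' u hu u hu u hu rfl
  rintro a (rfl | ha) b (rfl | hb) c (rfl | hc) d (rfl | hd) h
  case inr.inr.inr.inr => exact hA a ha b hb c hc d hd h
  all_goals grind

theorem isSidon_iUnion {α : Type*} [Add α] {A : ℕ → Set α} (hmono : Monotone A)
    (hA : ∀ n, IsSidon (A n)) : IsSidon (⋃ n, A n) := by
  intro a ha b hb c hc d hd
  obtain ⟨i, ha⟩ := Set.mem_iUnion.mp ha
  obtain ⟨j, hb⟩ := Set.mem_iUnion.mp hb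
  obtain ⟨k, hc⟩ := Set.mem_iUnion.mp hc
  obtain ⟨l, hd⟩ := Set.mem_iUnion.mp hd
  have hle : ∀ {m}, m ≤ max (max i j) (max k l) → A m ⊆ A (max (max i j) (max k l)) :=
    fun h => hmono h
  exact hA _ a (hle (by omega) ha) b (hle (by omega) hb) c (hle (by omega) hc) d
    (hle (by omega) hd)

theorem IsSidon.of_image {α β : Type*} [Add α] [Add β] {f : α → β} (hf : Function.Injective f)
    (hadd : ∀ x y, f (x + y) = f x + f y) {A : Set α} (h : IsSidon (f '' A)) : IsSidon A := by
  intro a ha b hb c hc d hd hsum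
  have := h _ ⟨a, ha, rfl⟩ _ ⟨b, hb, rfl⟩ _ ⟨c, hc, rfl⟩ _ ⟨d, hd, rfl⟩
    (by rw [← hadd, ← hadd, hsum])
  simpa only [hf.eq_iff] using this

theorem Rf_le_one_of_isSidon {a : ℕ → ℕ} (ha : Function.Injective a)
    (hA : IsSidon (Set.range a)) (n : ℕ) : Rf a n ≤ 1 := by
  refine card_le_one.mpr ?_
  rintro ⟨i, j⟩ hij ⟨i', j'⟩ hij'
  simp only [mem_filter] at hij hij'
  rcases hA _ ⟨i, rfl⟩ _ ⟨j, rfl⟩ _ ⟨i', rfl⟩ _ ⟨j', rfl⟩ (hij.2.2.trans hij'.2.2.symm) with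
    ⟨h, h'⟩ | ⟨h, h'⟩
  · rw [ha h, ha h']
  · have := ha h
    have := ha h'
    ext <;> simp only <;> omega

theorem Rf_le_sf_s10 {b : ℕ → ℕ} {m n : ℕ} (h : m ≤ n) : Rf b m ≤ sf b n :=
  le_sup (f := Rf b) (mem_range.mpr (by omega))

theorem natCast_le_rpow_one_third {m x : ℕ} :
    (m : ℝ) ≤ (x : ℝ) ^ ((1 : ℝ) / 3) ↔ m ^ 3 ≤ x := by
  rw [one_div, Real.le_rpow_inv_iff_of_pos (by positivity) (by positivity) (by norm_num),
    show (3 : ℝ) = ((3 : ℕ) : ℝ) by norm_num, Real.rpow_natCast]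
  exact_mod_cast Iff.rfl

theorem rpow_one_third_le_natCast {m x : ℕ} :
    (x : ℝ) ^ ((1 : ℝ) / 3) ≤ m ↔ x ≤ m ^ 3 := by
  rw [one_div, Real.rpow_inv_le_iff_of_pos (by positivity) (by positivity) (by norm_num),
    show (3 : ℝ) = ((3 : ℕ) : ℝ) by norm_num, Real.rpow_natCast]
  exact_mod_cast Iff.rfl

theorem df_le_of_dist_le {a b : ℕ → ℕ} {C : ℝ} (hC : 0 ≤ C)
    (h : ∀ t, (Nat.dist (a t) (b t) : ℝ) ≤ C * (min (a t) (b t) : ℕ) ^ ((1 : ℝ) / 3))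
    (n : ℕ) : (df a b n : ℝ) ≤ C * (n : ℝ) ^ ((1 : ℝ) / 3) := by
  obtain ⟨t, -, ht⟩ := exists_mem_eq_sup (range (n + 1)) nonempty_range_add_one
    fun t => if a t ≤ n ∨ b t ≤ n then Nat.dist (a t) (b t) else 0
  rw [df, ht]
  split_ifs with hle
  · refine (h t).trans (mul_le_mul_of_nonneg_left ?_ hC)
    exact Real.rpow_le_rpow (by positivity) (by exact_mod_cast (by omega)) (by norm_num)
  · simp only [Nat.cast_zero]
    positivity

theorem strictMono_toNat {f : ℕ → ℤ} (hf : StrictMono f) (h0 : ∀ t, 0 ≤ f t) :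
    StrictMono fun t => (f t).toNat := fun i j h => by
  have := hf h
  have := h0 i
  dsimp only
  omega

def hits (E : Finset ℤ) (k c lo hi : ℤ) : Finset ℤ :=
  E.filter fun e => lo ≤ k * c + e ∧ k * c + e ≤ hi

def heavy (S E : Finset ℤ) (k lo hi : ℤ) (θ : ℕ) : Finset ℤ :=
  S.filter fun c => θ ≤ #(hits E k c lo hi)

theorem hits_mono {E E' : Finset ℤ} (h : E ⊆ E') (k c lo hi : ℤ) :
    hits E k c lo hi ⊆ hits E' k c lo hi :=
  filter_subset_filter _ h

theorem card_filter_affine_mem_Icc_le (S : Finset ℤ) {k : ℤ} (hk : 0 < k) (e lo hi : ℤ) :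
    #(S.filter fun c => lo ≤ k * c + e ∧ k * c + e ≤ hi) ≤ ((hi - lo) / k + 1).toNat := by
  set T := S.filter fun c => lo ≤ k * c + e ∧ k * c + e ≤ hi
  rcases T.eq_empty_or_nonempty with hT | hT
  · simp [hT]
  have hsub : T ⊆ Icc (T.min' hT) (T.min' hT + (hi - lo) / k) := by
    intro c hc
    have hmin := (mem_filter.mp (T.min'_mem hT)).2
    have hcT := (mem_filter.mp hc).2
    refine mem_Icc.mpr ⟨T.min'_le c hc, ?_⟩
    have : (c - T.min' hT) * k ≤ hi - lo := by linarith
    linarith [Int.le_ediv_of_mul_le hk this]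
  calc #T ≤ #(Icc (T.min' hT) (T.min' hT + (hi - lo) / k)) := card_le_card hsub
    _ = ((hi - lo) / k + 1).toNat := by rw [Int.card_Icc]; congr 1; ring

theorem card_heavy_le (S E : Finset ℤ) {k : ℤ} (hk : 0 < k) (lo hi : ℤ) (θ : ℕ) :
    θ * #(heavy S E k lo hi θ) ≤ #E * ((hi - lo) / k + 1).toNat := by
  rw [mul_comm]
  refine card_mul_le_card_mul (fun c e => lo ≤ k * c + e ∧ k * c + e ≤ hi)
    (fun c hc => (mem_filter.mp hc).2) fun e _ => ?_
  exact (card_le_card (filter_subset_filter _ (filter_subset _ S))).trans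
    (card_filter_affine_mem_Icc_le S hk e lo hi)

theorem card_heavy_le_mul (S E : Finset ℤ) {k : ℤ} (hk : 0 < k) {lo hi : ℤ} {θ q : ℕ}
    (hθ : 0 < θ) (h : ((hi - lo) / k + 1).toNat ≤ q * θ) :
    #(heavy S E k lo hi θ) ≤ q * #E := by
  refine Nat.le_of_mul_le_mul_left ((card_heavy_le S E hk lo hi θ).trans ?_) hθ
  calc #E * ((hi - lo) / k + 1).toNat ≤ #E * (q * θ) := Nat.mul_le_mul_left _ h
    _ = θ * (q * #E) := by ring

theorem card_filter_le_card_hits (S E : Finset ℤ) {m : ℤ} (hm : 0 < m) (j c lo hi : ℤ)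
    (hS : ∀ w ∈ S, lo ≤ c + w ∧ c + w ≤ hi) :
    #(S.filter fun w => m * w + j * c ∈ E) ≤ #(hits E (m - j) c (m * lo) (m * hi)) := by
  refine card_le_card_of_injOn (fun w => m * w + j * c) (fun w hw => ?_) fun w₁ _ w₂ _ h => ?_
  · obtain ⟨hwS, hwE⟩ := mem_filter.mp hw
    obtain ⟨h₁, h₂⟩ := hS w hwS
    refine mem_filter.mpr ⟨hwE, ?_, ?_⟩ <;> nlinarith
  · simpa [hm.ne'] using h

theorem card_filter_add_self_mem_le (S E : Finset ℤ) : #(S.filter fun c => c + c ∈ E) ≤ #E :=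
  card_le_card_of_injOn (fun c => c + c) (fun c hc => (mem_filter.mp hc).2)
    fun a _ b _ h => by simp only at h; omega

theorem card_biUnion_Icc_le (F : Finset ℤ) (r : ℤ) :
    #(F.biUnion fun x => Icc (x - r) (x + r)) ≤ #F * (2 * r + 1).toNat := by
  calc _ ≤ ∑ x ∈ F, #(Icc (x - r) (x + r)) := card_biUnion_le
    _ = ∑ _x ∈ F, (2 * r + 1).toNat := sum_congr rfl fun x _ => by rw [Int.card_Icc]; congr 1; ring
    _ = #F * (2 * r + 1).toNat := by rw [sum_const, smul_eq_mul]

theorem filter_nonempty_of_card_filter_not_lt {α : Type*} {S : Finset α} {p : α → Prop}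
    [DecidablePred p] (h : #(S.filter fun x => ¬p x) < #S) : (S.filter p).Nonempty := by
  rw [← card_pos]
  have := card_filter_add_card_filter_not (s := S) p
  omega

def leastOr (S : Finset ℤ) : ℤ := if h : S.Nonempty then S.min' h else 0

theorem leastOr_mem {S : Finset ℤ} (h : S.Nonempty) : leastOr S ∈ S := by
  rw [leastOr, dif_pos h]
  exact S.min'_mem h

theorem leastOr_le {S : Finset ℤ} {x : ℤ} (hx : x ∈ S) : leastOr S ≤ x := by
  rw [leastOr, dif_pos ⟨x, hx⟩]
  exact S.min'_le x hx

def blockOf (s : ℕ) : ℕ := Nat.log 2 (s + 1)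

theorem blockOf_eq_iff {s k : ℕ} : blockOf s = k ↔ 2 ^ k ≤ s + 1 ∧ s + 1 < 2 * 2 ^ k := by
  rw [blockOf, Nat.log_eq_iff (.inr ⟨one_lt_two, s.succ_ne_zero⟩), pow_succ, mul_comm]

theorem two_pow_blockOf_le (s : ℕ) : 2 ^ blockOf s ≤ s + 1 :=
  (blockOf_eq_iff.mp rfl).1

theorem lt_two_mul_two_pow_blockOf (s : ℕ) : s + 1 < 2 * 2 ^ blockOf s :=
  (blockOf_eq_iff.mp rfl).2

theorem blockOf_mono : Monotone blockOf :=
  fun _ _ h => Nat.log_mono_right (Nat.succ_le_succ h)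

/-- The steps `s` of block `k` (those with `2 ^ k ≤ s + 1 < 2 ^ (k + 1)`) occupy the positions
`2 ^ (k + 1) - 2 ≤ t < 2 ^ (k + 2) - 2`: first the values `u s` in increasing order of `s`,
then the values `v s` in decreasing order of `s`. -/
def interleave (u v : ℕ → ℤ) (t : ℕ) : ℤ :=
  if t + 2 < 3 * 2 ^ blockOf (t / 2) then u (t + 1 - 2 ^ blockOf (t / 2))
  else v (5 * 2 ^ blockOf (t / 2) - 4 - t)

section Interleave

variable (u v : ℕ → ℤ)

theorem interleave_of_lt {t k : ℕ} (hk : blockOf (t / 2) = k) (ht : t + 2 < 3 * 2 ^ k) :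
    interleave u v t = u (t + 1 - 2 ^ k) := by
  subst hk
  exact if_pos ht

theorem interleave_of_ge {t k : ℕ} (hk : blockOf (t / 2) = k) (ht : 3 * 2 ^ k ≤ t + 2) :
    interleave u v t = v (5 * 2 ^ k - 4 - t) := by
  subst hk
  exact if_neg (not_lt.mpr ht)

theorem interleave_left_pos (s : ℕ) : interleave u v (s + 2 ^ blockOf s - 1) = u s := by
  have h₁ := two_pow_blockOf_le s
  have h₂ := lt_two_mul_two_pow_blockOf s
  rw [interleave_of_lt u v (k := blockOf s) (blockOf_eq_iff.mpr ⟨by omega, by omega⟩) (by omega)]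
  congr 1
  omega

theorem interleave_right_pos (s : ℕ) : interleave u v (5 * 2 ^ blockOf s - 4 - s) = v s := by
  have h₁ := two_pow_blockOf_le s
  have h₂ := lt_two_mul_two_pow_blockOf s
  rw [interleave_of_ge u v (k := blockOf s) (blockOf_eq_iff.mpr ⟨by omega, by omega⟩) (by omega)]
  congr 1
  omega

theorem exists_interleave_eq (v' : ℕ → ℤ) (t : ℕ) : ∃ s,
    interleave u v t = u s ∧ interleave u v' t = u s ∨
    interleave u v t = v s ∧ interleave u v' t = v' s := by
  unfold interleave
  split_ifs
  · exact ⟨_, .inl ⟨rfl, rfl⟩⟩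
  · exact ⟨_, .inr ⟨rfl, rfl⟩⟩

theorem strictMono_interleave
    (hu : ∀ s s', blockOf s = blockOf s' → s < s' → u s < u s')
    (hv : ∀ s s', blockOf s = blockOf s' → s < s' → v s' < v s)
    (huv : ∀ s, u s < v s) (hvu : ∀ s s', blockOf s < blockOf s' → v s < u s') :
    StrictMono (interleave u v) := by
  refine strictMono_nat_of_lt_succ fun t => ?_
  obtain ⟨h₁, h₂⟩ := blockOf_eq_iff.mp (rfl : blockOf (t / 2) = _)
  set k := blockOf (t / 2) with hk
  have hblock : ∀ s, 2 ^ k ≤ s + 1 → s + 1 < 2 * 2 ^ k → blockOf s = k :=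
    fun s h h' => blockOf_eq_iff.mpr ⟨h, h'⟩
  rcases lt_trichotomy (t + 3) (3 * 2 ^ k) with h | h | h
  · have hk' : blockOf ((t + 1) / 2) = k := hblock _ (by omega) (by omega)
    rw [interleave_of_lt u v hk.symm (by omega), interleave_of_lt u v hk' (by omega)]
    exact hu _ _ ((hblock _ (by omega) (by omega)).trans (hblock _ (by omega) (by omega)).symm)
      (by omega)
  · have hk' : blockOf ((t + 1) / 2) = k := hblock _ (by omega) (by omega)
    rw [interleave_of_lt u v hk.symm (by omega), interleave_of_ge u v hk' (by omega),
      show 5 * 2 ^ k - 4 - (t + 1) = t + 1 - 2 ^ k by omega]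
    exact huv _
  rcases lt_or_eq_of_le (show t + 3 ≤ 4 * 2 ^ k by omega) with h' | h'
  · have hk' : blockOf ((t + 1) / 2) = k := hblock _ (by omega) (by omega)
    rw [interleave_of_ge u v hk.symm (by omega), interleave_of_ge u v hk' (by omega)]
    exact hv _ _ ((hblock _ (by omega) (by omega)).trans (hblock _ (by omega) (by omega)).symm)
      (by omega)
  · have hk' : blockOf ((t + 1) / 2) = k + 1 :=
      blockOf_eq_iff.mpr ⟨by rw [pow_succ]; omega, by rw [pow_succ]; omega⟩
    rw [interleave_of_ge u v hk.symm (by omega),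
      interleave_of_lt u v hk' (by rw [pow_succ]; omega)]
    have e₁ : blockOf (5 * 2 ^ k - 4 - t) = k := hblock _ (by omega) (by omega)
    have e₂ : blockOf (t + 1 + 1 - 2 ^ (k + 1)) = k + 1 :=
      blockOf_eq_iff.mpr ⟨by rw [pow_succ]; omega, by rw [pow_succ]; omega⟩
    exact hvu _ _ (by rw [e₁, e₂]; omega)

end Interleave

namespace GreedySidon

noncomputable section

def SidonCompatible (F : Finset ℤ) (u : ℤ) : Prop := u ∉ F + F - F ∧ u + u ∉ F + F

instance (F : Finset ℤ) : DecidablePred (SidonCompatible F) :=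
  fun u => inferInstanceAs (Decidable (u ∉ F + F - F ∧ u + u ∉ F + F))

theorem isSidon_insert {F : Finset ℤ} {u : ℤ} (hF : IsSidon (F : Set ℤ))
    (hu : SidonCompatible F u) : IsSidon ((insert u F : Finset ℤ) : Set ℤ) := by
  rw [coe_insert]
  exact hF.insert (by rw [← coe_add, ← coe_sub]; exact_mod_cast hu.1)
    (by rw [← coe_add]; exact_mod_cast hu.2)

theorem SidonCompatible.anti {F F' : Finset ℤ} {u : ℤ} (h : F ⊆ F')
    (hu : SidonCompatible F' u) : SidonCompatible F u :=
  ⟨fun hm => hu.1 (sub_subset_sub (add_subset_add h h) h hm),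
    fun hm => hu.2 (add_subset_add h h hm)⟩

theorem sidonCompatible_insert {F : Finset ℤ} {c w : ℤ} (h₁ : w ∉ F) (h₂ : w ≠ c)
    (h₃ : c + c - w ∉ F) (h₄ : w ∉ F + F - F) (h₅ : w - c ∉ F - F) (h₆ : w + c ∉ F + F)
    (h₇ : w + w ∉ F + F) (h₈ : w + w - c ∉ F) : SidonCompatible (insert c F) w := by
  simp only [SidonCompatible, Finset.mem_sub, Finset.mem_add, mem_insert] at *
  constructor
  · rintro ⟨_, ⟨y, hy, z, hz, rfl⟩, x, hx, hw⟩
    rcases hy with rfl | hy <;> rcases hz with rfl | hz <;> rcases hx with rfl | hx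
    case inr.inr.inr => exact h₄ ⟨_, ⟨y, hy, z, hz, rfl⟩, x, hx, hw⟩
    all_goals grind
  · rintro ⟨y, hy, z, hz, hw⟩
    rcases hy with rfl | hy <;> rcases hz with rfl | hz
    case inr.inr => exact h₇ ⟨y, hy, z, hz, hw⟩
    all_goals grind

def scale (k : ℕ) : ℕ := 2 ^ k

def cube (k : ℕ) : ℤ := (scale k : ℤ) ^ 3

def target (k : ℕ) : ℤ := 7000 * cube k

def width (k : ℕ) : ℤ := 20 * scale k

def centerRange (k : ℕ) : Finset ℤ := Ico (1000 * cube k) (2000 * cube k)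

def window (k : ℕ) (c : ℤ) : Finset ℤ := Icc (target k - c) (target k - c + width k)

theorem scale_pos (k : ℕ) : 0 < scale k := Nat.two_pow_pos k

theorem scale_le_cube (k : ℕ) : (scale k : ℤ) ≤ cube k :=
  le_self_pow₀ (by exact_mod_cast scale_pos k) (by norm_num)

theorem cube_pos (k : ℕ) : 0 < cube k := by
  have := scale_le_cube k
  have := scale_pos k
  omega

theorem two_mul_scale_le {j k : ℕ} (h : j < k) : 2 * scale j ≤ scale k := by
  unfold scale
  rw [← pow_succ']
  exact Nat.pow_le_pow_right two_pos h

theorem eight_mul_cube_le {j k : ℕ} (h : j < k) : 8 * cube j ≤ cube k := by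
  have : (2 * scale j : ℤ) ≤ scale k := by exact_mod_cast two_mul_scale_le h
  unfold cube
  nlinarith [pow_le_pow_left₀ (by positivity) this 3]

theorem cube_eq (k : ℕ) : cube k = 8 ^ k := by
  rw [cube, scale, Nat.cast_pow, ← pow_mul, mul_comm, pow_mul]
  norm_num

theorem card_centerRange (k : ℕ) : #(centerRange k) = 1000 * scale k ^ 3 := by
  have : ((scale k ^ 3 : ℕ) : ℤ) = cube k := by push_cast [cube]; ring
  rw [centerRange, Int.card_Ico]
  omega

theorem card_window (k : ℕ) (c : ℤ) : #(window k c) = 20 * scale k + 1 := by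
  rw [window, Int.card_Icc, width]
  omega

/-- Apart from cases ruled out by size, a partner `w` of `c` is forbidden only when
`w ∈ F + F - F`, `w - c ∈ F - F`, `w + c ∈ F + F`, `2 * w ∈ F + F` or `2 * w - c ∈ F`
(see `sidonCompatible_insert`). For a light centre `c` each kind but the third meets the window
of `c` fewer times than the listed thresholds; the third kind is controlled by the block
structure (`filter_add_mem_window_subset`). -/
def IsLight (k : ℕ) (F : Finset ℤ) (c : ℤ) : Prop :=
  #(hits (F + F - F) 1 c (target k) (target k + width k)) < 10 * scale k ∧
  #(hits (F - F) 2 c (target k) (target k + width k)) < 4 * scale k ∧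
  #(hits (F + F) 2 c (2 * target k) (2 * (target k + width k))) < 2 * scale k ∧
  #(hits F 3 c (2 * target k) (2 * (target k + width k))) < 2 * scale k

def IsGoodCenter (k : ℕ) (F : Finset ℤ) (c : ℤ) : Prop :=
  SidonCompatible F c ∧ (∀ x ∈ F, width k < |c - x|) ∧ IsLight k F c

instance (k : ℕ) (F : Finset ℤ) : DecidablePred (IsLight k F) :=
  fun _ => by unfold IsLight; infer_instance

instance (k : ℕ) (F : Finset ℤ) : DecidablePred (IsGoodCenter k F) :=
  fun _ => by unfold IsGoodCenter; infer_instance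

theorem IsGoodCenter.anti {k : ℕ} {F F' : Finset ℤ} {c : ℤ} (h : F ⊆ F')
    (hc : IsGoodCenter k F' c) : IsGoodCenter k F c := by
  obtain ⟨hS, hgap, h₁, h₂, h₃, h₄⟩ := hc
  have hFF := add_subset_add h h
  refine ⟨hS.anti h, fun x hx => hgap x (h hx), ?_, ?_, ?_, ?_⟩
  · exact (card_le_card (hits_mono (sub_subset_sub hFF h) _ _ _ _)).trans_lt h₁
  · exact (card_le_card (hits_mono (sub_subset_sub h h) _ _ _ _)).trans_lt h₂
  · exact (card_le_card (hits_mono hFF _ _ _ _)).trans_lt h₃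
  · exact (card_le_card (hits_mono h _ _ _ _)).trans_lt h₄

theorem filter_not_isGoodCenter_subset (k : ℕ) (F : Finset ℤ) :
    (centerRange k).filter (fun c => ¬IsGoodCenter k F c) ⊆
      (F + F - F) ∪ (centerRange k).filter (fun c => c + c ∈ F + F) ∪
      F.biUnion (fun x => Icc (x - width k) (x + width k)) ∪
      heavy (centerRange k) (F + F - F) 1 (target k) (target k + width k) (10 * scale k) ∪
      heavy (centerRange k) (F - F) 2 (target k) (target k + width k) (4 * scale k) ∪
      heavy (centerRange k) (F + F) 2 (2 * target k) (2 * (target k + width k)) (2 * scale k) ∪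
      heavy (centerRange k) F 3 (2 * target k) (2 * (target k + width k)) (2 * scale k) := by
  intro c hc
  obtain ⟨hcS, hbad⟩ := mem_filter.mp hc
  simp only [IsGoodCenter, SidonCompatible, IsLight, not_and_or, not_lt, not_forall,
    abs_le] at hbad
  simp only [heavy, mem_union, mem_filter, mem_biUnion, mem_Icc, hcS, true_and]
  grind

theorem card_filter_not_isGoodCenter_lt {k : ℕ} {F : Finset ℤ} (hF : #F < 4 * scale k) :
    #((centerRange k).filter fun c => ¬IsGoodCenter k F c) < #(centerRange k) := by
  set S := centerRange k
  set n := #F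
  set L := scale k
  have hL : 0 < L := scale_pos k
  have hF3 : #(F + F - F) ≤ n ^ 3 :=
    card_sub_le.trans ((Nat.mul_le_mul_right _ card_add_le).trans_eq (by ring))
  have hF2 : #(F + F) ≤ n ^ 2 := card_add_le.trans_eq (by ring)
  have hF2' : #(F - F) ≤ n ^ 2 := card_sub_le.trans_eq (by ring)
  have hdouble : #(S.filter fun c => c + c ∈ F + F) ≤ n ^ 2 :=
    (card_filter_add_self_mem_le S (F + F)).trans hF2
  have hnear : #(F.biUnion fun x => Icc (x - width k) (x + width k)) ≤ n * (40 * L + 1) := by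
    refine (card_biUnion_Icc_le F (width k)).trans_eq ?_
    rw [width]
    congr 1
    omega
  have H₁ := card_heavy_le_mul S (F + F - F) one_pos (lo := target k) (hi := target k + width k)
    (q := 3) (by omega : 0 < 10 * L) (by rw [width]; omega)
  have H₂ := card_heavy_le_mul S (F - F) two_pos (lo := target k) (hi := target k + width k)
    (q := 3) (by omega : 0 < 4 * L) (by rw [width]; omega)
  have H₃ := card_heavy_le_mul S (F + F) two_pos (lo := 2 * target k)
    (hi := 2 * (target k + width k)) (q := 11) (by omega : 0 < 2 * L) (by rw [width]; omega)
  have H₄ := card_heavy_le_mul S F three_pos (lo := 2 * target k)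
    (hi := 2 * (target k + width k)) (q := 7) (by omega : 0 < 2 * L) (by rw [width]; omega)
  have hn3 : n ^ 3 ≤ 64 * L ^ 3 := (Nat.pow_le_pow_left hF.le 3).trans_eq (by ring)
  have hL23 : L ^ 2 ≤ L ^ 3 := Nat.pow_le_pow_right hL (by norm_num)
  have hn2 : n ^ 2 ≤ 16 * L ^ 3 := (Nat.pow_le_pow_left hF.le 2).trans (by nlinarith)
  have hnL : n * L ≤ 4 * L ^ 3 := (Nat.mul_le_mul_right L hF.le).trans (by nlinarith)
  have hL3 : L ≤ L ^ 3 := Nat.le_self_pow (by norm_num) L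
  have hexpand : n * (40 * L + 1) = 40 * (n * L) + n := by ring
  rw [show #S = 1000 * L ^ 3 from card_centerRange k]
  refine (card_le_card (filter_not_isGoodCenter_subset k F)).trans_lt ?_
  calc
    _ ≤ #(F + F - F) + n ^ 2 + n * (40 * L + 1) + 3 * #(F + F - F) + 3 * #(F - F) +
        11 * #(F + F) + 7 * n := by
      iterate 6 refine (card_union_le _ _).trans (Nat.add_le_add ?_ (by assumption))
      exact le_rfl
    _ < 1000 * L ^ 3 := by omega

def chooseCenter (k : ℕ) (F : Finset ℤ) : ℤ :=
  leastOr ((centerRange k).filter (IsGoodCenter k F))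

def choosePartner (k : ℕ) (F : Finset ℤ) (c : ℤ) : ℤ :=
  leastOr ((window k c).filter (SidonCompatible (insert c F)))

def elems : ℕ → Finset ℤ
  | 0 => ∅
  | s + 1 =>
    let c := chooseCenter (blockOf s) (elems s)
    insert (choosePartner (blockOf s) (elems s) c) (insert c (elems s))

def centerAt (s : ℕ) : ℤ := chooseCenter (blockOf s) (elems s)

def partnerAt (s : ℕ) : ℤ := choosePartner (blockOf s) (elems s) (centerAt s)

theorem elems_succ (s : ℕ) :
    elems (s + 1) = insert (partnerAt s) (insert (centerAt s) (elems s)) := rfl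

theorem elems_mono : Monotone elems :=
  monotone_nat_of_le_succ fun s => by
    rw [elems_succ]
    exact (subset_insert _ _).trans (subset_insert _ _)

theorem mem_elems {x : ℤ} {s : ℕ} :
    x ∈ elems s ↔ ∃ j < s, x = centerAt j ∨ x = partnerAt j := by
  induction s with
  | zero => simp [elems]
  | succ s ih =>
    simp only [elems_succ, mem_insert, ih, Nat.lt_succ_iff_lt_or_eq]
    grind

theorem card_elems_lt (s : ℕ) : #(elems s) < 4 * scale (blockOf s) := by
  have hcard : #(elems s) ≤ 2 * s := by
    induction s with
    | zero => simp [elems]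
    | succ s ih =>
      rw [elems_succ]
      have := card_insert_le (partnerAt s) (insert (centerAt s) (elems s))
      have := card_insert_le (centerAt s) (elems s)
      omega
  have := lt_two_mul_two_pow_blockOf s
  unfold scale
  omega

theorem centerAt_mem (s : ℕ) :
    centerAt s ∈ (centerRange (blockOf s)).filter (IsGoodCenter (blockOf s) (elems s)) :=
  leastOr_mem (filter_nonempty_of_card_filter_not_lt
    (card_filter_not_isGoodCenter_lt (card_elems_lt s)))

theorem centerAt_mem_centerRange (s : ℕ) :
    1000 * cube (blockOf s) ≤ centerAt s ∧ centerAt s < 2000 * cube (blockOf s) :=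
  mem_Ico.mp (mem_filter.mp (centerAt_mem s)).1

theorem isGoodCenter_centerAt (s : ℕ) : IsGoodCenter (blockOf s) (elems s) (centerAt s) :=
  (mem_filter.mp (centerAt_mem s)).2

/-- Goodness only gets harder as `elems` grows, so the least good centre never decreases within
a block; the gap condition then makes it jump by more than `width`. -/
theorem centerAt_add_width_lt {s s' : ℕ} (hb : blockOf s = blockOf s') (h : s < s') :
    centerAt s + width (blockOf s) < centerAt s' := by
  have hle : centerAt s ≤ centerAt s' := by
    refine leastOr_le (mem_filter.mpr ⟨?_, ?_⟩)
    · rw [hb]; exact (mem_filter.mp (centerAt_mem s')).1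
    · rw [hb]; exact (isGoodCenter_centerAt s').anti (elems_mono h.le)
  have hgap := (isGoodCenter_centerAt s').2.1 (centerAt s) (mem_elems.mpr ⟨s, h, .inl rfl⟩)
  rw [abs_of_nonneg (sub_nonneg.mpr hle), ← hb] at hgap
  linarith

theorem eq_of_centerAt_add_partnerAt_mem {i j : ℕ} (hb : blockOf i = blockOf j)
    (hw : partnerAt j ∈ window (blockOf j) (centerAt j))
    (h : target (blockOf j) ≤ centerAt i + partnerAt j ∧
      centerAt i + partnerAt j ≤ target (blockOf j) + width (blockOf j)) : i = j := by
  have := mem_Icc.mp hw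
  rcases lt_trichotomy i j with hij | rfl | hij
  · have := centerAt_add_width_lt hb hij
    rw [hb] at this
    omega
  · rfl
  · have := centerAt_add_width_lt hb.symm hij
    omega

section Partner

variable {s : ℕ} (hprev : ∀ j < s, partnerAt j ∈ window (blockOf j) (centerAt j))
include hprev

theorem mem_elems_cases {x : ℤ} (hx : x ∈ elems s) :
    0 < x ∧ x ≤ 750 * cube (blockOf s) + 10 * scale (blockOf s) ∨
    ∃ j < s, blockOf j = blockOf s ∧ (x = centerAt j ∨ x = partnerAt j) := by
  obtain ⟨j, hj, hxj⟩ := mem_elems.mp hx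
  rcases (blockOf_mono hj.le).lt_or_eq with hlt | heq
  · left
    have := centerAt_mem_centerRange j
    have := mem_Icc.mp (hprev j hj)
    have := eight_mul_cube_le hlt
    have : 2 * (scale (blockOf j) : ℤ) ≤ scale (blockOf s) := by
      exact_mod_cast two_mul_scale_le hlt
    have := scale_le_cube (blockOf j)
    simp only [target, width] at *
    omega
  · exact .inr ⟨j, hj, heq, hxj⟩

theorem mem_elems_bounds {x : ℤ} (hx : x ∈ elems s) :
    0 < x ∧ x ≤ 6000 * cube (blockOf s) + 20 * scale (blockOf s) := by
  have := scale_le_cube (blockOf s)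
  rcases mem_elems_cases hprev hx with h | ⟨j, hj, hb, rfl | rfl⟩
  · omega
  · have := centerAt_mem_centerRange j
    rw [hb] at this
    omega
  · have := centerAt_mem_centerRange j
    have := mem_Icc.mp (hprev j hj)
    rw [hb] at *
    simp only [target, width] at *
    omega

theorem filter_add_mem_window_subset :
    (elems s + elems s).filter (fun e => target (blockOf s) ≤ e ∧
        e ≤ target (blockOf s) + width (blockOf s)) ⊆
      (Ico (2 ^ blockOf s - 1) s).image fun j => centerAt j + partnerAt j := by
  intro e he
  obtain ⟨he, hlo, hhi⟩ := mem_filter.mp he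
  obtain ⟨y, hy, z, hz, rfl⟩ := Finset.mem_add.mp he
  have hQ := scale_le_cube (blockOf s)
  have hy' := mem_elems_bounds hprev hy
  have hz' := mem_elems_bounds hprev hz
  have hpair : ∀ i j, i < s → j < s → blockOf i = blockOf s → blockOf j = blockOf s →
      y + z = centerAt i + partnerAt j →
      y + z ∈ (Ico (2 ^ blockOf s - 1) s).image fun j => centerAt j + partnerAt j := by
    intro i j hi hj hbi hbj hsum
    obtain rfl := eq_of_centerAt_add_partnerAt_mem (hbi.trans hbj.symm) (hprev j hj)
      (by rw [hbj, ← hsum]; exact ⟨hlo, hhi⟩)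
    have := two_pow_blockOf_le i
    rw [hbi] at this
    exact mem_image.mpr ⟨i, mem_Ico.mpr ⟨by omega, hi⟩, hsum.symm⟩
  simp only [target, width] at hlo hhi
  rcases mem_elems_cases hprev hy with hy₀ | ⟨i, hi, hbi, hyi⟩
  · omega
  rcases mem_elems_cases hprev hz with hz₀ | ⟨j, hj, hbj, hzj⟩
  · omega
  have hci := centerAt_mem_centerRange i
  have hcj := centerAt_mem_centerRange j
  have hwi := mem_Icc.mp (hprev i hi)
  have hwj := mem_Icc.mp (hprev j hj)
  rw [hbi] at hci hwi
  rw [hbj] at hcj hwj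
  simp only [target, width] at hwi hwj
  rcases hyi with rfl | rfl <;> rcases hzj with rfl | rfl
  · omega
  · exact hpair i j hi hj hbi hbj rfl
  · exact hpair j i hj hi hbj hbi (add_comm _ _)
  · omega

theorem mem_window_nondegenerate {w : ℤ} (hw : w ∈ window (blockOf s) (centerAt s)) :
    w ∉ elems s ∧ w ≠ centerAt s ∧ centerAt s + centerAt s - w ∉ elems s := by
  have hc := centerAt_mem_centerRange s
  have hQ := scale_le_cube (blockOf s)
  have hw' := mem_Icc.mp hw
  simp only [target, width] at hw'
  refine ⟨fun hmem => ?_, by omega, fun hmem => ?_⟩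
  · rcases mem_elems_cases hprev hmem with h | ⟨j, hj, hb, hwj | hwj⟩
    · omega
    · have := centerAt_mem_centerRange j
      rw [hb] at this
      omega
    · have hgap := centerAt_add_width_lt hb hj
      have := mem_Icc.mp (hprev j hj)
      rw [hb] at hgap this
      simp only [target, width] at hgap this
      omega
  · have := (mem_elems_bounds hprev hmem).1
    omega

theorem filter_not_sidonCompatible_subset :
    (window (blockOf s) (centerAt s)).filter
        (fun w => ¬SidonCompatible (insert (centerAt s) (elems s)) w) ⊆
      (window (blockOf s) (centerAt s)).filter (· ∈ elems s + elems s - elems s) ∪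
      (window (blockOf s) (centerAt s)).filter (· + -centerAt s ∈ elems s - elems s) ∪
      (window (blockOf s) (centerAt s)).filter (· + centerAt s ∈ elems s + elems s) ∪
      (window (blockOf s) (centerAt s)).filter (2 * · ∈ elems s + elems s) ∪
      (window (blockOf s) (centerAt s)).filter (2 * · + -centerAt s ∈ elems s) := by
  intro w hw
  obtain ⟨hwS, hbad⟩ := mem_filter.mp hw
  obtain ⟨h₁, h₂, h₃⟩ := mem_window_nondegenerate hprev hwS
  simp only [mem_union, mem_filter, hwS, true_and]
  by_contra! h
  refine hbad (sidonCompatible_insert h₁ h₂ h₃ h.1.1.1.1 ?_ h.1.1.2 ?_ ?_)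
  · rw [sub_eq_add_neg w]; exact h.1.1.1.2
  · rw [← two_mul]; exact h.1.2
  · rw [← two_mul, sub_eq_add_neg _ (centerAt s)]; exact h.2

theorem card_hits_add_window_le : #(hits (elems s + elems s) 0 (centerAt s)
    (target (blockOf s)) (target (blockOf s) + width (blockOf s))) ≤ scale (blockOf s) - 1 := by
  simp only [hits, zero_mul, zero_add]
  refine (card_le_card (filter_add_mem_window_subset hprev)).trans (card_image_le.trans ?_)
  have := lt_two_mul_two_pow_blockOf s
  rw [Nat.card_Ico, scale]
  omega

theorem card_filter_not_sidonCompatible_lt :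
    #((window (blockOf s) (centerAt s)).filter
      fun w => ¬SidonCompatible (insert (centerAt s) (elems s)) w) <
      #(window (blockOf s) (centerAt s)) := by
  obtain ⟨l₁, l₂, l₄, l₅⟩ := (isGoodCenter_centerAt s).2.2
  have l₃ := card_hits_add_window_le hprev
  have hsub := filter_not_sidonCompatible_subset hprev
  set k := blockOf s
  set c := centerAt s
  set F := elems s
  set S := window k c
  have hS : ∀ w ∈ S, target k ≤ c + w ∧ c + w ≤ target k + width k := fun w hw => by
    have := mem_Icc.mp hw
    omega
  have c₁ := card_filter_le_card_hits S (F + F - F) one_pos 0 c _ _ hS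
  have c₂ := card_filter_le_card_hits S (F - F) one_pos (-1) c _ _ hS
  have c₃ := card_filter_le_card_hits S (F + F) one_pos 1 c _ _ hS
  have c₄ := card_filter_le_card_hits S (F + F) two_pos 0 c _ _ hS
  have c₅ := card_filter_le_card_hits S F two_pos (-1) c _ _ hS
  norm_num at c₁ c₂ c₃ c₄ c₅
  have := scale_pos k
  rw [card_window]
  refine (card_le_card hsub).trans_lt ?_
  calc
    _ ≤ #(hits (F + F - F) 1 c (target k) (target k + width k)) +
        #(hits (F - F) 2 c (target k) (target k + width k)) + (scale k - 1) +
        #(hits (F + F) 2 c (2 * target k) (2 * (target k + width k))) +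
        #(hits F 3 c (2 * target k) (2 * (target k + width k))) := by
      iterate 4 refine (card_union_le _ _).trans (Nat.add_le_add ?_ (by omega))
      omega
    _ < 20 * scale k + 1 := by omega

end Partner

theorem partnerAt_mem (s : ℕ) : partnerAt s ∈
    (window (blockOf s) (centerAt s)).filter (SidonCompatible (insert (centerAt s) (elems s))) := by
  induction s using Nat.strong_induction_on with
  | _ s ih =>
    exact leastOr_mem (filter_nonempty_of_card_filter_not_lt
      (card_filter_not_sidonCompatible_lt fun j hj => (mem_filter.mp (ih j hj)).1))

theorem partnerAt_mem_window (s : ℕ) : partnerAt s ∈ window (blockOf s) (centerAt s) :=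
  (mem_filter.mp (partnerAt_mem s)).1

theorem isSidon_elems (s : ℕ) : IsSidon (elems s : Set ℤ) := by
  induction s with
  | zero => simp [elems, IsSidon]
  | succ s ih =>
    rw [elems_succ]
    exact isSidon_insert (isSidon_insert ih (isGoodCenter_centerAt s).1)
      (mem_filter.mp (partnerAt_mem s)).2

theorem isSidon_iUnion_elems : IsSidon (⋃ s, (elems s : Set ℤ)) :=
  isSidon_iUnion (fun _ _ h => coe_subset.mpr (elems_mono h)) isSidon_elems

theorem strictMono_interleave_centerAt {v : ℕ → ℤ}
    (hv : ∀ s, target (blockOf s) - centerAt s ≤ v s ∧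
      v s ≤ target (blockOf s) - centerAt s + width (blockOf s)) :
    StrictMono (interleave centerAt v) := by
  have hc := centerAt_mem_centerRange
  refine strictMono_interleave _ _ (fun s s' hb h => ?_) (fun s s' hb h => ?_) (fun s => ?_)
    (fun s s' hb => ?_)
  · have := centerAt_add_width_lt hb h
    have : 0 ≤ width (blockOf s) := by unfold width; positivity
    omega
  · have := centerAt_add_width_lt hb h
    have := hv s
    have := hv s'
    rw [← hb] at *
    omega
  · have := hv s
    have := hc s
    have := scale_le_cube (blockOf s)
    simp only [target, width] at *
    omega
  · have := hv s
    have := hc s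
    have := hc s'
    have := scale_le_cube (blockOf s)
    have := eight_mul_cube_le hb
    simp only [target, width] at *
    omega

def seqA : ℕ → ℤ := interleave centerAt partnerAt

def seqB : ℕ → ℤ := interleave centerAt fun s => target (blockOf s) - centerAt s

theorem strictMono_seqA : StrictMono seqA :=
  strictMono_interleave_centerAt fun s => mem_Icc.mp (partnerAt_mem_window s)

theorem strictMono_seqB : StrictMono seqB :=
  strictMono_interleave_centerAt fun s => ⟨le_rfl, by unfold width; omega⟩

theorem exists_bounds_seqA_seqB (t : ℕ) : ∃ k, 1000 * cube k ≤ seqA t ∧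
    1000 * cube k ≤ seqB t ∧ |seqA t - seqB t| ≤ width k := by
  obtain ⟨s, ⟨hA, hB⟩ | ⟨hA, hB⟩⟩ := exists_interleave_eq centerAt partnerAt
    (fun s => target (blockOf s) - centerAt s) t
  all_goals
    refine ⟨blockOf s, ?_⟩
    have := centerAt_mem_centerRange s
    have := mem_Icc.mp (partnerAt_mem_window s)
    rw [seqA, seqB, hA, hB]
    simp only [target, width] at *
    exact ⟨by omega, by omega, abs_le.mpr ⟨by omega, by omega⟩⟩

theorem seqA_pos (t : ℕ) : 0 < seqA t := by
  obtain ⟨k, h, -⟩ := exists_bounds_seqA_seqB t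
  have := cube_pos k
  omega

theorem seqB_pos (t : ℕ) : 0 < seqB t := by
  obtain ⟨k, -, h, -⟩ := exists_bounds_seqA_seqB t
  have := cube_pos k
  omega

theorem Rf_seqA_le_one : ∀ n, Rf (fun t => (seqA t).toNat) n ≤ 1 := by
  refine Rf_le_one_of_isSidon
    (strictMono_toNat strictMono_seqA fun t => (seqA_pos t).le).injective
    (IsSidon.of_image Nat.cast_injective (Nat.cast_add (R := ℤ)) (isSidon_iUnion_elems.mono ?_))
  rintro _ ⟨_, ⟨t, rfl⟩, rfl⟩
  rw [Int.toNat_of_nonneg (seqA_pos t).le]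
  obtain ⟨s, ⟨hA, -⟩ | ⟨hA, -⟩⟩ := exists_interleave_eq centerAt partnerAt partnerAt t
  all_goals
    refine Set.mem_iUnion.mpr ⟨s + 1, ?_⟩
    rw [seqA, hA, elems_succ]
    simp

theorem dist_seqA_seqB_le (t : ℕ) : (Nat.dist (seqA t).toNat (seqB t).toNat : ℝ) ≤
    2 * (min (seqA t).toNat (seqB t).toNat : ℕ) ^ ((1 : ℝ) / 3) := by
  obtain ⟨k, hA, hB, hAB⟩ := exists_bounds_seqA_seqB t
  obtain ⟨h₁, h₂⟩ := abs_le.mp hAB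
  have hcube : 1000 * cube k = (((10 * scale k) ^ 3 : ℕ) : ℤ) := by
    unfold cube; push_cast; ring
  have hdist : Nat.dist (seqA t).toNat (seqB t).toNat ≤ 2 * (10 * scale k) := by
    unfold Nat.dist width at *
    omega
  have hmin : (10 * scale k) ^ 3 ≤ min (seqA t).toNat (seqB t).toNat := by omega
  calc (Nat.dist (seqA t).toNat (seqB t).toNat : ℝ) ≤ 2 * ((10 * scale k : ℕ) : ℝ) := by
        exact_mod_cast hdist
    _ ≤ _ := by gcongr; exact natCast_le_rpow_one_third.mpr hmin

theorem scale_le_Rf_seqB (k : ℕ) : scale k ≤ Rf (fun t => (seqB t).toNat) (7000 * 8 ^ k) := by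
  have h28 : 2 ^ k ≤ 8 ^ k := Nat.pow_le_pow_left (by norm_num) k
  have h8 : ((8 ^ k : ℕ) : ℤ) = cube k := by rw [cube_eq]; push_cast; rfl
  let pos (i : ℕ) : ℕ × ℕ := (2 * 2 ^ k - 2 + i, 4 * 2 ^ k - 3 - i)
  have hinj : Function.Injective pos := fun i j h => by
    have := congrArg Prod.fst h
    simp only [pos] at this
    omega
  calc scale k = #((range (2 ^ k)).image pos) := by
        rw [card_image_of_injective _ hinj, card_range, scale]
    _ ≤ _ := by
      refine card_le_card fun p hp => ?_
      obtain ⟨i, hi, rfl⟩ := mem_image.mp hp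
      have hi := mem_range.mp hi
      set s := 2 ^ k - 1 + i
      have hb : blockOf s = k := blockOf_eq_iff.mpr ⟨by omega, by omega⟩
      have e₁ : seqB (2 * 2 ^ k - 2 + i) = centerAt s := by
        have := interleave_left_pos centerAt (fun s => target (blockOf s) - centerAt s) s
        rwa [hb, show s + 2 ^ k - 1 = 2 * 2 ^ k - 2 + i by omega] at this
      have e₂ : seqB (4 * 2 ^ k - 3 - i) = target k - centerAt s := by
        have := interleave_right_pos centerAt (fun s => target (blockOf s) - centerAt s) s
        rwa [hb, show 5 * 2 ^ k - 4 - s = 4 * 2 ^ k - 3 - i by omega] at this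
      have hc := centerAt_mem_centerRange s
      rw [hb] at hc
      refine mem_filter.mpr ⟨mem_product.mpr ⟨mem_range.mpr ?_, mem_range.mpr ?_⟩, ?_, ?_⟩
      · dsimp only [pos]; omega
      · dsimp only [pos]; omega
      · dsimp only [pos]; omega
      · dsimp only [pos]
        rw [e₁, e₂, target]
        omega

theorem rpow_one_third_le_sf_seqB {n : ℕ} (hn : 7000 ≤ n) :
    (1 / 40 : ℝ) * (n : ℝ) ^ ((1 : ℝ) / 3) ≤ sf (fun t => (seqB t).toNat) n := by
  set κ := Nat.log 8 (n / 7000)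
  have h₁ : 8 ^ κ ≤ n / 7000 := Nat.pow_log_le_self 8 (by omega)
  have h₂ : n / 7000 < 8 ^ (κ + 1) := Nat.lt_pow_succ_log_self (by norm_num) _
  have hcube : (40 * scale κ) ^ 3 = 64000 * 8 ^ κ := by
    rw [scale, mul_pow, ← pow_mul, mul_comm κ, pow_mul]
    norm_num
  have hroot : (n : ℝ) ^ ((1 : ℝ) / 3) ≤ (40 * scale κ : ℕ) :=
    rpow_one_third_le_natCast.mpr (by rw [hcube, pow_succ] at *; omega)
  have hsf : scale κ ≤ sf (fun t => (seqB t).toNat) n :=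
    (scale_le_Rf_seqB κ).trans (Rf_le_sf_s10 (by omega))
  calc (1 / 40 : ℝ) * (n : ℝ) ^ ((1 : ℝ) / 3) ≤ (1 / 40 : ℝ) * (40 * scale κ : ℕ) := by gcongr
    _ = scale κ := by push_cast; ring
    _ ≤ _ := by exact_mod_cast hsf

end

end GreedySidon

theorem stmt10 :
    ∃ a b : ℕ → ℕ, StrictMono a ∧ StrictMono b ∧
      (∀ n, Rf a n ≤ 1) ∧
      (∃ C : ℝ, ∀ᶠ n : ℕ in atTop, (df a b n : ℝ) ≤ C * (n : ℝ) ^ ((1 : ℝ) / 3)) ∧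
      (∃ c : ℝ, 0 < c ∧ ∀ᶠ n : ℕ in atTop, c * (n : ℝ) ^ ((1 : ℝ) / 3) ≤ (sf b n : ℝ)) := by
  open GreedySidon in
  exact ⟨_, _, strictMono_toNat strictMono_seqA fun t => (seqA_pos t).le,
      strictMono_toNat strictMono_seqB fun t => (seqB_pos t).le, Rf_seqA_le_one,
      ⟨2, .of_forall (df_le_of_dist_le zero_le_two dist_seqA_seqB_le)⟩,
      ⟨1 / 40, by norm_num, eventually_atTop.mpr ⟨7000, fun _ => rpow_one_third_le_sf_seqB⟩⟩⟩
end
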